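/- Let H be a Hermitian operator on ℂ^d with non-degenerate energy gaps, let ρ_0 be any density matrix on ℂ^d with time evolution ρ_t = e^{−iHt} ρ_0 e^{iHt}, let ω = $[ρ_0], and let A be any Hermitian operator on ℂ^d. Then limsup_{τ→∞} (1/τ) ∫_0^τ (Tr[A ρ_t] − Tr[A ω])² dt ≤ ‖A‖∞² / d^eff(ω). -/

import Mathlib

open MeasureTheory Matrix Filter
open scoped BigOperators Kronecker InnerProductSpace ComplexOrder

noncomputable section

namespace PQSM

variable {n : Type*} [Fintype n] [DecidableEq n]

instance : MeasurableSpace (EuclideanSpace ℂ n) := MeasurableSpace.comap WithLp.ofLp MeasurableSpace.pi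

/-- The outer product (pure state density matrix) `|u⟩⟨u|` of a vector with itself. -/
def outer (u : EuclideanSpace ℂ n) : Matrix n n ℂ :=
  fun i j => u i * (starRingEnd ℂ) (u j)

/-- Operator norm of a matrix acting on Euclidean space. -/
def opNorm (A : Matrix n n ℂ) : ℝ := ‖Matrix.toEuclideanCLM (𝕜 := ℂ) A‖

/-- Trace norm `Tr √(AᴴA)`. -/
def traceNorm (A : Matrix n n ℂ) : ℝ :=
  (((Matrix.posSemidef_conjTranspose_mul_self A).1.eigenvectorUnitary : Matrix n n ℂ) *
    diagonal (((↑) : ℝ → ℂ) ∘ Real.sqrt ∘ (Matrix.posSemidef_conjTranspose_mul_self A).1.eigenvalues) *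
    (star (Matrix.posSemidef_conjTranspose_mul_self A).1.eigenvectorUnitary : Matrix n n ℂ)).trace.re

/-- Trace distance `½‖ρ − σ‖₁`. -/
def traceDist (ρ σ : Matrix n n ℂ) : ℝ := traceNorm (ρ - σ) / 2

/-- Real expectation value `Re Tr[B ρ]`. -/
def expVal (B ρ : Matrix n n ℂ) : ℝ := ((B * ρ).trace).re

/-- Purity `Tr[ρ²]`. -/
def purity (ρ : Matrix n n ℂ) : ℝ := ((ρ * ρ).trace).re

/-- Effective dimension `1/Tr[ρ²]`. -/
def dEff (ρ : Matrix n n ℂ) : ℝ := 1 / purity ρ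

/-- An orthogonal projector. -/
def IsProjector (P : Matrix n n ℂ) : Prop := P.IsHermitian ∧ P * P = P

/-- A density matrix: positive semidefinite with unit trace. -/
def IsDensityMatrix (ρ : Matrix n n ℂ) : Prop := ρ.PosSemidef ∧ ρ.trace = 1

/-- The microcanonical state `Π_R/d_R` of the subspace with projector `P` of dimension `dR`. -/
def mcState (P : Matrix n n ℂ) (dR : ℕ) : Matrix n n ℂ := ((dR : ℂ))⁻¹ • P

/-- `μ` is the uniform (rotation-invariant, Haar) probability measure on the unit sphere of the
subspace of `ℂ^n` whose orthogonal projector is `P`: `μ` is a probability measure, it is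
concentrated on the unit vectors fixed by `P`, and it is invariant under every unitary of the
full space that preserves the subspace (equivalently, commutes with `P`). -/
def IsUniformOnSphere (P : Matrix n n ℂ) (μ : Measure (EuclideanSpace ℂ n)) : Prop :=
  IsProbabilityMeasure μ ∧
  (∀ᵐ u ∂μ, ‖u‖ = 1 ∧ Matrix.toEuclideanCLM (𝕜 := ℂ) P u = u) ∧
  ∀ U ∈ Matrix.unitaryGroup n ℂ,
    U * P = P * U →
    Measure.map (fun u => Matrix.toEuclideanCLM (𝕜 := ℂ) U u) μ = μ

/-- Non-degenerate energy gaps. -/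
def HasNonDegenerateGaps {H : Matrix n n ℂ} (hH : H.IsHermitian) : Prop :=
  ∀ k l m p : n, hH.eigenvalues k - hH.eigenvalues l = hH.eigenvalues m - hH.eigenvalues p →
    (k = l ∧ m = p) ∨ (k = m ∧ l = p)

/-- Dephasing `$[ρ] = Σ_k |E_k⟩⟨E_k| ρ |E_k⟩⟨E_k|` with respect to the eigenbasis of `H`. -/
def dephase {H : Matrix n n ℂ} (hH : H.IsHermitian) (ρ : Matrix n n ℂ) : Matrix n n ℂ :=
  ∑ k, outer (hH.eigenvectorBasis k) * ρ * outer (hH.eigenvectorBasis k)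

/-- Time evolution `ρ_t = e^{−iHt} ρ e^{iHt}`. -/
def evol (H : Matrix n n ℂ) (t : ℝ) (ρ : Matrix n n ℂ) : Matrix n n ℂ :=
  NormedSpace.exp ((-(Complex.I * t)) • H) * ρ * NormedSpace.exp ((Complex.I * t) • H)

variable {nS nB : Type*} [Fintype nS] [Fintype nB]

/-- Partial trace over the second (bath) tensor factor. -/
def ptraceB (M : Matrix (nS × nB) (nS × nB) ℂ) : Matrix nS nS ℂ :=
  fun i j => ∑ b, M (i, b) (j, b)

/-- Partial trace over the first (system) tensor factor. -/
def ptraceS (M : Matrix (nS × nB) (nS × nB) ℂ) : Matrix nB nB ℂ :=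
  fun i j => ∑ a, M (a, i) (a, j)

/-- Tensor product of vectors. -/
def tensorVec (u : EuclideanSpace ℂ nS) (v : EuclideanSpace ℂ nB) :
    EuclideanSpace ℂ (nS × nB) := WithLp.toLp 2 (fun p => u p.1 * v p.2)

/-- Von Neumann entropy `−Σ λ_i log λ_i` (with `0 log 0 = 0`). -/
def vnEntropy (ρ : Matrix n n ℂ) : ℝ :=
  if h : ρ.IsHermitian then -∑ i, h.eigenvalues i * Real.log (h.eigenvalues i) else 0

/-- Quantum mutual information `I_{SB}(ρ) = S(ρ^S) + S(ρ^B) − S(ρ)`. -/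
def mutualInfo [DecidableEq nS] [DecidableEq nB] (ρ : Matrix (nS × nB) (nS × nB) ℂ) : ℝ :=
  vnEntropy (ptraceB ρ) + vnEntropy (ptraceS ρ) - vnEntropy ρ

/-!
In the eigenbasis of `H`, `Tr[A ρ_t] - Tr[A ω] = Re Σ_{k ≠ l} A_{kl} ρ_{lk} e^{i(E_k - E_l)t}` is a
trigonometric polynomial whose frequencies are pairwise distinct by the non-degenerate-gaps
assumption. Time averaging its squared modulus therefore kills all cross terms, leaving
`Σ_{k ≠ l} |A_{kl}|² |ρ_{lk}|²` in the limit. Positivity of `ρ` gives `|ρ_{lk}|² ≤ ρ_{kk} ρ_{ll}`,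
and `2 ρ_{kk} ρ_{ll} ≤ ρ_{kk}² + ρ_{ll}²` together with the bound `‖A‖∞²` on the squared norms of
the rows and columns of `A` bounds this by `‖A‖∞² Σ_k ρ_{kk}² = ‖A‖∞² Tr[ω²]`.
-/

section TimeAverage

open Complex ComplexConjugate Topology

variable {E : Type*} [NormedAddCommGroup E] [NormedSpace ℝ E]

def timeAvg (f : ℝ → E) (τ : ℝ) : E := τ⁻¹ • ∫ t in (0:ℝ)..τ, f t

theorem timeAvg_eq_one_div_mul (f : ℝ → ℝ) :
    timeAvg f = fun τ => 1 / τ * ∫ t in (0:ℝ)..τ, f t := by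
  simp [timeAvg, one_div, funext_iff]

theorem timeAvg_mono {f g : ℝ → ℝ} (hf : Continuous f) (hg : Continuous g) (hfg : f ≤ g)
    {τ : ℝ} (hτ : 0 ≤ τ) : timeAvg f τ ≤ timeAvg g τ :=
  mul_le_mul_of_nonneg_left
    (intervalIntegral.integral_mono_on hτ (hf.intervalIntegrable _ _) (hg.intervalIntegrable _ _)
      fun t _ => hfg t) (inv_nonneg.mpr hτ)

theorem timeAvg_nonneg {f : ℝ → ℝ} (hf : 0 ≤ f) {τ : ℝ} (hτ : 0 ≤ τ) : 0 ≤ timeAvg f τ :=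
  mul_nonneg (inv_nonneg.mpr hτ) (intervalIntegral.integral_nonneg hτ fun t _ => hf t)

theorem ofReal_timeAvg (f : ℝ → ℝ) (τ : ℝ) :
    ((timeAvg f τ : ℝ) : ℂ) = timeAvg (fun t => (f t : ℂ)) τ := by
  simp [timeAvg, intervalIntegral.integral_ofReal]

theorem timeAvg_finset_sum {ι : Type*} (s : Finset ι) (f : ι → ℝ → E)
    (hf : ∀ i ∈ s, Continuous (f i)) (τ : ℝ) :
    timeAvg (fun t => ∑ i ∈ s, f i t) τ = ∑ i ∈ s, timeAvg (f i) τ := by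
  rw [timeAvg, intervalIntegral.integral_finsetSum fun i hi => (hf i hi).intervalIntegrable _ _,
    Finset.smul_sum]
  rfl

theorem timeAvg_const_mul (c : ℂ) (f : ℝ → ℂ) (τ : ℝ) :
    timeAvg (fun t => c * f t) τ = c * timeAvg f τ := by
  simp only [timeAvg, intervalIntegral.integral_const_mul, mul_smul_comm]

theorem norm_integral_exp_mul_I_le {δ : ℝ} (hδ : δ ≠ 0) (τ : ℝ) :
    ‖∫ t in (0:ℝ)..τ, exp (δ * t * I)‖ ≤ 2 / |δ| := by
  have hδI : (δ : ℂ) * I ≠ 0 := mul_ne_zero (ofReal_ne_zero.mpr hδ) I_ne_zero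
  have hexp : ∀ t : ℝ, exp (δ * t * I) = exp ((δ * I) * t) := fun t => by ring_nf
  simp_rw [hexp, integral_exp_mul_complex hδI, norm_div, norm_mul, norm_I, norm_real,
    Real.norm_eq_abs, mul_one, ofReal_zero, mul_zero, exp_zero]
  gcongr
  calc ‖exp (δ * I * τ) - 1‖ ≤ ‖exp (δ * I * τ)‖ + ‖(1 : ℂ)‖ := norm_sub_le _ _
    _ = 2 := by rw [mul_right_comm, ← ofReal_mul, norm_exp_ofReal_mul_I]; norm_num

theorem tendsto_timeAvg_exp_mul_I (δ : ℝ) :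
    Tendsto (timeAvg fun t : ℝ => exp (δ * t * I)) atTop (𝓝 (if δ = 0 then 1 else 0)) := by
  split_ifs with hδ
  · refine tendsto_const_nhds.congr' ((eventually_ne_atTop 0).mono fun τ hτ => ?_)
    simp [timeAvg, hδ, hτ]
  · exact tendsto_inv_atTop_zero.zero_smul_isBoundedUnder_le
      (isBoundedUnder_of ⟨2 / |δ|, norm_integral_exp_mul_I_le hδ⟩)

theorem normSq_sum_mul_exp {ι : Type*} (s : Finset ι) (c : ι → ℂ) (θ : ι → ℝ) (t : ℝ) :
    (normSq (∑ p ∈ s, c p * exp (θ p * t * I)) : ℂ) =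
      ∑ p ∈ s, ∑ q ∈ s, c p * conj (c q) * exp ((θ p - θ q : ℝ) * t * I) := by
  rw [← mul_conj, map_sum, Finset.sum_mul_sum]
  refine Finset.sum_congr rfl fun p _ => Finset.sum_congr rfl fun q _ => ?_
  rw [map_mul, ← Complex.exp_conj, mul_mul_mul_comm, ← exp_add]
  congr 2
  simp only [map_mul, conj_ofReal, conj_I, ofReal_sub]
  ring

/-- The frequencies being distinct, only the diagonal terms of `|∑ c_p e^{iθ_p t}|²` survive
time averaging. -/
theorem tendsto_timeAvg_normSq_sum_mul_exp {ι : Type*} (s : Finset ι) (c : ι → ℂ) (θ : ι → ℝ)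
    (hθ : Set.InjOn θ s) :
    Tendsto (timeAvg fun t => normSq (∑ p ∈ s, c p * exp (θ p * t * I))) atTop
      (𝓝 (∑ p ∈ s, normSq (c p))) := by
  have hℂ : Tendsto
      (fun τ => ((timeAvg (fun t => normSq (∑ p ∈ s, c p * exp (θ p * t * I))) τ : ℝ) : ℂ))
      atTop (𝓝 (∑ p ∈ s, ∑ q ∈ s, c p * conj (c q) * if θ p - θ q = 0 then 1 else 0)) := by
    simp_rw [ofReal_timeAvg, normSq_sum_mul_exp]
    refine (tendsto_finsetSum _ fun p _ => tendsto_finsetSum _ fun q _ =>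
      (tendsto_timeAvg_exp_mul_I _).const_mul _).congr fun τ => ?_
    rw [timeAvg_finset_sum s
      (fun p t => ∑ q ∈ s, c p * conj (c q) * exp ((θ p - θ q : ℝ) * t * I)) fun p _ => by fun_prop]
    refine Finset.sum_congr rfl fun p _ => ?_
    rw [timeAvg_finset_sum s (fun q t => c p * conj (c q) * exp ((θ p - θ q : ℝ) * t * I))
      fun q _ => by fun_prop]
    exact Finset.sum_congr rfl fun q _ => (timeAvg_const_mul _ _ _).symm
  have hdiag : ∀ p ∈ s, (∑ q ∈ s, c p * conj (c q) * if θ p - θ q = 0 then 1 else 0) =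
      normSq (c p) := fun p hp => by
    rw [Finset.sum_eq_single_of_mem p hp fun q hq hqp => by
      rw [if_neg (sub_ne_zero.mpr fun h => hqp (hθ hq hp h.symm)), mul_zero]]
    simp [mul_conj]
  rw [Finset.sum_congr rfl hdiag, ← ofReal_sum] at hℂ
  simpa [Function.comp_def] using (continuous_re.tendsto _).comp hℂ

theorem limsup_timeAvg_sq_re_sum_mul_exp_le {ι : Type*} (s : Finset ι) (c : ι → ℂ) (θ : ι → ℝ)
    (hθ : Set.InjOn θ s) :
    limsup (timeAvg fun t => (∑ p ∈ s, c p * exp (θ p * t * I)).re ^ 2) atTop ≤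
      ∑ p ∈ s, normSq (c p) := by
  have hlim := tendsto_timeAvg_normSq_sum_mul_exp s c θ hθ
  have hz : Continuous fun t : ℝ => ∑ p ∈ s, c p * exp (θ p * t * I) := by fun_prop
  refine (limsup_le_limsup ?_ ?_ hlim.isBoundedUnder_le).trans_eq hlim.limsup_eq
  · exact (eventually_ge_atTop 0).mono fun τ hτ => timeAvg_mono
      ((continuous_re.comp hz).pow 2) (continuous_normSq.comp hz)
      (fun t => (sq _).trans_le (re_sq_le_normSq _)) hτ
  · exact isCoboundedUnder_le_of_eventually_le _ <|
      (eventually_ge_atTop 0).mono fun τ hτ => timeAvg_nonneg (fun t => sq_nonneg _) hτ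

end TimeAverage

/-- Cauchy–Schwarz for the semi-inner product `⟪x, y⟫ = xᴴ M y` induced by `M`. -/
theorem _root_.Matrix.PosSemidef.normSq_apply_le {M : Matrix n n ℂ} (hM : M.PosSemidef)
    (k l : n) : Complex.normSq (M k l) ≤ (M k k).re * (M l l).re := by
  let := M.toSeminormedAddCommGroup hM
  let := M.toInnerProductSpace hM
  have hinner : ∀ i j, inner ℂ (Pi.single i 1 : n → ℂ) (Pi.single j 1) = M i j := fun i j => by
    show (M *ᵥ Pi.single j 1) ⬝ᵥ star (Pi.single i 1) = M i j
    simp [dotProduct, Pi.single_apply]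
  have hcs := inner_mul_inner_self_le (𝕜 := ℂ) (Pi.single k 1 : n → ℂ) (Pi.single l 1)
  rw [hinner, hinner, hinner, hinner, ← hM.isHermitian.apply l k, norm_star] at hcs
  rw [Complex.normSq_eq_norm_sq, sq]
  exact hcs

open scoped Matrix.Norms.L2Operator in
theorem opNorm_conjTranspose (B : Matrix n n ℂ) : opNorm Bᴴ = opNorm B :=
  l2_opNorm_conjTranspose B

theorem sum_normSq_col_le_opNorm_sq (B : Matrix n n ℂ) (k : n) :
    ∑ l, Complex.normSq (B l k) ≤ opNorm B ^ 2 := by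
  have h : ‖toEuclideanCLM (𝕜 := ℂ) B (EuclideanSpace.single k 1)‖ ≤ opNorm B := by
    simpa [opNorm] using (toEuclideanCLM (𝕜 := ℂ) B).le_opNorm (EuclideanSpace.single k 1)
  calc ∑ l, Complex.normSq (B l k)
      = ‖toEuclideanCLM (𝕜 := ℂ) B (EuclideanSpace.single k 1)‖ ^ 2 := by
        simp [EuclideanSpace.norm_sq_eq, Complex.normSq_eq_norm_sq]
    _ ≤ opNorm B ^ 2 := by gcongr

theorem sum_normSq_row_le_opNorm_sq (B : Matrix n n ℂ) (l : n) :
    ∑ k, Complex.normSq (B l k) ≤ opNorm B ^ 2 := by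
  simpa [opNorm_conjTranspose] using sum_normSq_col_le_opNorm_sq Bᴴ l

theorem sum_mul_mul_normSq_le (p : n → ℝ) (B : Matrix n n ℂ) :
    ∑ k, ∑ l, p k * p l * Complex.normSq (B k l) ≤ opNorm B ^ 2 * ∑ k, p k ^ 2 := by
  have rows : ∑ k, ∑ l, p k ^ 2 * Complex.normSq (B k l) ≤ opNorm B ^ 2 * ∑ k, p k ^ 2 := by
    rw [Finset.mul_sum]
    gcongr with k
    rw [← Finset.mul_sum, mul_comm]
    gcongr
    exact sum_normSq_row_le_opNorm_sq B k
  have cols : ∑ k, ∑ l, p l ^ 2 * Complex.normSq (B k l) ≤ opNorm B ^ 2 * ∑ k, p k ^ 2 := by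
    rw [Finset.sum_comm, Finset.mul_sum]
    gcongr with l
    rw [← Finset.mul_sum, mul_comm]
    gcongr
    exact sum_normSq_col_le_opNorm_sq B l
  have amgm : ∀ k l, p k * p l * Complex.normSq (B k l) ≤
      (p k ^ 2 * Complex.normSq (B k l) + p l ^ 2 * Complex.normSq (B k l)) / 2 := fun k l => by
    nlinarith [mul_nonneg (sq_nonneg (p k - p l)) (Complex.normSq_nonneg (B k l))]
  calc ∑ k, ∑ l, p k * p l * Complex.normSq (B k l)
      ≤ ∑ k, ∑ l, (p k ^ 2 * Complex.normSq (B k l) + p l ^ 2 * Complex.normSq (B k l)) / 2 :=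
        Finset.sum_le_sum fun k _ => Finset.sum_le_sum fun l _ => amgm k l
    _ = (∑ k, ∑ l, p k ^ 2 * Complex.normSq (B k l)
          + ∑ k, ∑ l, p l ^ 2 * Complex.normSq (B k l)) / 2 := by
        simp only [← Finset.sum_div, Finset.sum_add_distrib]
    _ ≤ opNorm B ^ 2 * ∑ k, p k ^ 2 := by linarith

section Eigenbasis

open Complex

variable {H : Matrix n n ℂ} (hH : H.IsHermitian)

/-- `toEigenbasis hH M k l = ⟨E_k| M |E_l⟩`. -/
def toEigenbasis : Matrix n n ℂ ≃⋆ₐ[ℂ] Matrix n n ℂ :=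
  Unitary.conjStarAlgAut ℂ _ (star hH.eigenvectorUnitary)

theorem toEigenbasis_apply (M : Matrix n n ℂ) :
    toEigenbasis hH M = star (hH.eigenvectorUnitary : Matrix n n ℂ) * M * hH.eigenvectorUnitary :=
  Unitary.conjStarAlgAut_star_apply _ _

theorem toEigenbasis_self : toEigenbasis hH H = diagonal fun k => (hH.eigenvalues k : ℂ) :=
  hH.conjStarAlgAut_star_eigenvectorUnitary

theorem trace_toEigenbasis (M : Matrix n n ℂ) : (toEigenbasis hH M).trace = M.trace := by
  rw [toEigenbasis_apply, trace_mul_cycle, ← Unitary.coe_star, Unitary.coe_mul_star_self, one_mul]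

theorem toEigenbasis_exp (M : Matrix n n ℂ) :
    toEigenbasis hH (NormedSpace.exp M) = NormedSpace.exp (toEigenbasis hH M) := by
  set U : Matrix n n ℂ := (hH.eigenvectorUnitary : Matrix n n ℂ)
  have hinv : U⁻¹ = star U := inv_eq_left_inv (Unitary.coe_star_mul_self _)
  have hunit : IsUnit U := (Unitary.toUnits hH.eigenvectorUnitary).isUnit
  rw [toEigenbasis_apply, toEigenbasis_apply, ← hinv, exp_conj' _ _ hunit]

theorem toEigenbasis_exp_smul (c : ℂ) :
    toEigenbasis hH (NormedSpace.exp (c • H)) = diagonal fun k => exp (c * hH.eigenvalues k) := by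
  rw [toEigenbasis_exp, map_smul, toEigenbasis_self, ← diagonal_smul, exp_diagonal]
  congr 1
  funext k
  simp [Pi.coe_exp, ← Complex.exp_eq_exp_ℂ]

theorem toEigenbasis_evol (t : ℝ) (ρ : Matrix n n ℂ) (k l : n) :
    toEigenbasis hH (evol H t ρ) k l =
      exp ((hH.eigenvalues l - hH.eigenvalues k : ℝ) * t * I) * toEigenbasis hH ρ k l := by
  rw [evol, map_mul, map_mul, toEigenbasis_exp_smul, toEigenbasis_exp_smul, mul_diagonal,
    diagonal_mul, mul_right_comm, ← Complex.exp_add]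
  congr 2
  push_cast
  ring

theorem toEigenbasis_outer_eigenvectorBasis (k : n) :
    toEigenbasis hH (outer (hH.eigenvectorBasis k)) = single k k 1 := by
  rw [show outer (hH.eigenvectorBasis k) = (toEigenbasis hH).symm (single k k 1) from ?_,
    StarAlgEquiv.apply_symm_apply]
  ext i j
  simp [toEigenbasis, outer, mul_apply, single, star_apply, ite_and, mul_comm]

theorem toEigenbasis_dephase (ρ : Matrix n n ℂ) :
    toEigenbasis hH (dephase hH ρ) = diagonal fun k => toEigenbasis hH ρ k k := by
  simp only [dephase, map_sum, map_mul, toEigenbasis_outer_eigenvectorBasis,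
    single_mul_mul_single, one_mul, mul_one, sum_single_eq_diagonal]

theorem trace_mul_eq_sum_toEigenbasis (A M : Matrix n n ℂ) :
    (A * M).trace = ∑ k, ∑ l, toEigenbasis hH A k l * toEigenbasis hH M l k := by
  rw [← trace_toEigenbasis hH, map_mul]
  rfl

theorem expVal_evol_sub_expVal_dephase (A ρ : Matrix n n ℂ) (t : ℝ) :
    expVal A (evol H t ρ) - expVal A (dephase hH ρ) =
      (∑ p ∈ Finset.univ.offDiag, toEigenbasis hH A p.1 p.2 * toEigenbasis hH ρ p.2 p.1 *
        exp ((hH.eigenvalues p.1 - hH.eigenvalues p.2 : ℝ) * t * I)).re := by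
  have hsplit : ∀ f : n → n → ℂ,
      ∑ k, ∑ l, f k l = ∑ k, f k k + ∑ p ∈ Finset.univ.offDiag, f p.1 p.2 := fun f => by
    rw [← Finset.sum_diag Finset.univ (fun p => f p.1 p.2), ← Finset.sum_union
      (Finset.disjoint_diag_offDiag _), Finset.diag_union_offDiag, Finset.sum_product']
  simp only [expVal, trace_mul_eq_sum_toEigenbasis hH, toEigenbasis_evol, toEigenbasis_dephase,
    diagonal_apply, mul_ite, mul_zero, Finset.sum_ite_eq', Finset.mem_univ, if_true, ← sub_re]
  rw [hsplit]
  simp only [sub_self, ofReal_zero, zero_mul, Complex.exp_zero, one_mul, add_sub_cancel_left]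
  congr 1
  exact Finset.sum_congr rfl fun p _ => by ring

open scoped Matrix.Norms.L2Operator in
theorem opNorm_toEigenbasis (B : Matrix n n ℂ) : opNorm (toEigenbasis hH B) = opNorm B := by
  show ‖toEigenbasis hH B‖ = ‖B‖
  rw [toEigenbasis_apply, ← Unitary.coe_star, CStarRing.norm_mul_coe_unitary,
    CStarRing.norm_coe_unitary_mul]

theorem purity_dephase {ρ : Matrix n n ℂ} (hρ : ρ.IsHermitian) :
    purity (dephase hH ρ) = ∑ k, (toEigenbasis hH ρ k k).re ^ 2 := by
  have hρ' : (toEigenbasis hH ρ).IsHermitian := by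
    rw [IsHermitian, ← star_eq_conjTranspose, ← map_star, hρ.star_eq]
  rw [purity, ← trace_toEigenbasis hH, map_mul, toEigenbasis_dephase, diagonal_mul_diagonal,
    trace_diagonal, Complex.re_sum]
  refine Finset.sum_congr rfl fun k _ => ?_
  rw [← hρ'.coe_re_apply_self k]
  simp [sq]

theorem sum_offDiag_normSq_le_opNorm_sq_mul_purity {ρ : Matrix n n ℂ} (hρ : ρ.PosSemidef)
    (A : Matrix n n ℂ) :
    ∑ q ∈ Finset.univ.offDiag,
        Complex.normSq (toEigenbasis hH A q.1 q.2 * toEigenbasis hH ρ q.2 q.1)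
      ≤ opNorm A ^ 2 * purity (dephase hH ρ) := by
  have hρ' : (toEigenbasis hH ρ).PosSemidef := by
    rw [toEigenbasis_apply, star_eq_conjTranspose]
    exact hρ.conjTranspose_mul_mul_same _
  set p : n → ℝ := fun k => (toEigenbasis hH ρ k k).re
  calc ∑ q ∈ Finset.univ.offDiag,
        Complex.normSq (toEigenbasis hH A q.1 q.2 * toEigenbasis hH ρ q.2 q.1)
      ≤ ∑ q ∈ Finset.univ.offDiag,
          p q.1 * p q.2 * Complex.normSq (toEigenbasis hH A q.1 q.2) := by
        gcongr with q
        rw [Complex.normSq_mul, mul_comm]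
        exact mul_le_mul_of_nonneg_right ((hρ'.normSq_apply_le q.2 q.1).trans_eq (mul_comm _ _))
          (Complex.normSq_nonneg _)
    _ ≤ ∑ q : n × n, p q.1 * p q.2 * Complex.normSq (toEigenbasis hH A q.1 q.2) := by
        refine Finset.sum_le_sum_of_subset_of_nonneg (Finset.subset_univ _)
          fun ⟨k, l⟩ _ hkl => ?_
        obtain rfl : k = l := by simpa using hkl
        exact mul_nonneg (mul_self_nonneg _) (Complex.normSq_nonneg _)
    _ = ∑ k, ∑ l, p k * p l * Complex.normSq (toEigenbasis hH A k l) := Fintype.sum_prod_type _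
    _ ≤ opNorm A ^ 2 * purity (dephase hH ρ) := by
        rw [← opNorm_toEigenbasis hH A, purity_dephase hH hρ.isHermitian]
        exact sum_mul_mul_normSq_le p _

end Eigenbasis

theorem HasNonDegenerateGaps.injOn_offDiag {H : Matrix n n ℂ} {hH : H.IsHermitian}
    (hgaps : HasNonDegenerateGaps hH) :
    Set.InjOn (fun p : n × n => hH.eigenvalues p.1 - hH.eigenvalues p.2)
      (Finset.univ.offDiag : Finset (n × n)) := by
  rintro ⟨k, l⟩ hkl ⟨m, q⟩ - h
  rcases hgaps k l m q h with ⟨rfl, -⟩ | ⟨rfl, rfl⟩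
  · simp at hkl
  · rfl

theorem equilibration_of_expectation_values_general
    (d : ℕ) (H : Matrix (Fin d) (Fin d) ℂ) (hH : H.IsHermitian)
    (hgaps : HasNonDegenerateGaps hH)
    (ρ₀ : Matrix (Fin d) (Fin d) ℂ) (hρ₀ : IsDensityMatrix ρ₀)
    (A : Matrix (Fin d) (Fin d) ℂ) :
    limsup (fun τ : ℝ =>
        (1 / τ) * ∫ t in (0:ℝ)..τ,
          (expVal A (evol H t ρ₀) - expVal A (dephase hH ρ₀)) ^ 2) atTop
      ≤ opNorm A ^ 2 / dEff (dephase hH ρ₀) := by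
  simp_rw [← timeAvg_eq_one_div_mul, expVal_evol_sub_expVal_dephase hH A ρ₀]
  refine (limsup_timeAvg_sq_re_sum_mul_exp_le Finset.univ.offDiag
    (fun q => toEigenbasis hH A q.1 q.2 * toEigenbasis hH ρ₀ q.2 q.1)
    (fun q => hH.eigenvalues q.1 - hH.eigenvalues q.2) hgaps.injOn_offDiag).trans ?_
  calc _ ≤ opNorm A ^ 2 * purity (dephase hH ρ₀) :=
        sum_offDiag_normSq_le_opNorm_sq_mul_purity hH hρ₀.1 A
    _ = opNorm A ^ 2 / dEff (dephase hH ρ₀) := by rw [dEff, div_div_eq_mul_div, div_one]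

/-- equilibration of expectation values: the time average of the squared deviation
of `Tr[Aρ_t]` from `Tr[Aω]` is bounded by `‖A‖∞²/d^eff(ω)`. -/
theorem equilibration_of_expectation_values
    (d : ℕ) (H : Matrix (Fin d) (Fin d) ℂ) (hH : H.IsHermitian)
    (hgaps : HasNonDegenerateGaps hH)
    (ρ₀ : Matrix (Fin d) (Fin d) ℂ) (hρ₀ : IsDensityMatrix ρ₀)
    (A : Matrix (Fin d) (Fin d) ℂ) (hA : A.IsHermitian) :
    limsup (fun τ : ℝ =>
        (1 / τ) * ∫ t in (0:ℝ)..τ,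
          (expVal A (evol H t ρ₀) - expVal A (dephase hH ρ₀)) ^ 2) atTop
      ≤ opNorm A ^ 2 / dEff (dephase hH ρ₀) :=
  equilibration_of_expectation_values_general d H hH hgaps ρ₀ hρ₀ A

end PQSM
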